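/- Let F_u be an invertible block lower bidiagonal matrix, B and M_p, A_p, F_p as in the space-time Schur complement preconditioner setup, with F_p block lower bidiagonal and M_p, A_p block diagonal (all invertible). Then the generalized eigenvalue problem [[F_u, Bᵀ],[B, 0]] v = λ [[F_u, Bᵀ],[0, -X]] v with X = A_p F_p^{-1} M_p has λ = 1 as an eigenvalue with multiplicity at least N_u (the dimension of the velocity space), and the remaining eigenvalues solve (X^{-1} B F_u^{-1} Bᵀ - λ I) p = 0. -/

import Mathlib

open Matrix

/-!
The difference `A - P = [[0, 0], [B, X]]` has only `N_p` nonzero rows, so by rank–nullity its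
kernel has dimension at least `N_u`. For `λ ≠ 1`, write `w = (u, p)`: the first block row of
`A w = λ P w` reads `(1 - λ)(F_u u + Bᵀ p) = 0`, so `u = -F_u⁻¹ Bᵀ p`, and substituting this into the
second block row `B u = -λ X p` gives `B F_u⁻¹ Bᵀ p = λ X p`. Finally `p ≠ 0`, since `p = 0` would
force `u = 0`.
-/

namespace Matrix

variable {K m n : Type*} [Field K] [Fintype m] [Fintype n]

theorem ker_toLin'_fromBlocks_zero_zero [DecidableEq m] [DecidableEq n]
    (C : Matrix n m K) (D : Matrix n n K) :
    LinearMap.ker (toLin' (fromBlocks (0 : Matrix m m K) 0 C D)) =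
      LinearMap.ker (toLin' (fromCols C D)) := by
  ext x
  simp [fromBlocks_mulVec, fromCols_mulVec, ← Sum.elim_zero_zero, Sum.elim_injective'.eq_iff]

theorem card_le_finrank_ker_toLin'_fromBlocks_zero_zero [DecidableEq m] [DecidableEq n]
    (C : Matrix n m K) (D : Matrix n n K) :
    Fintype.card m ≤
      Module.finrank K (LinearMap.ker (toLin' (fromBlocks (0 : Matrix m m K) 0 C D))) := by
  have hsum := LinearMap.finrank_range_add_finrank_ker (toLin' (fromCols C D))
  have hrange : Module.finrank K (LinearMap.range (toLin' (fromCols C D))) ≤ Fintype.card n :=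
    (Submodule.finrank_le _).trans_eq (Module.finrank_fintype_fun_eq_card K)
  rw [Module.finrank_fintype_fun_eq_card, Fintype.card_sum] at hsum
  rw [ker_toLin'_fromBlocks_zero_zero]
  omega

section SaddlePoint

variable (F : Matrix m m K) (G : Matrix m n K) (B : Matrix n m K) (X : Matrix n n K)

omit [Fintype m] [Fintype n] in
theorem fromBlocks_sub_fromBlocks_neg :
    fromBlocks F G B 0 - fromBlocks F G 0 (-X) = fromBlocks 0 0 B X := by
  ext (i | i) (j | j) <;> simp

theorem saddlePoint_eigen_blockRows {l : K} (hl : l ≠ 1) {u : m → K} {p : n → K}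
    (h : fromBlocks F G B 0 *ᵥ Sum.elim u p = l • (fromBlocks F G 0 (-X) *ᵥ Sum.elim u p)) :
    F *ᵥ u + G *ᵥ p = 0 ∧ B *ᵥ u = -(l • X *ᵥ p) := by
  have htop : F *ᵥ u + G *ᵥ p = l • (F *ᵥ u + G *ᵥ p) := funext fun i ↦ by
    simpa [fromBlocks_mulVec] using congrFun h (Sum.inl i)
  have hbot : B *ᵥ u = -(l • X *ᵥ p) := funext fun j ↦ by
    simpa [fromBlocks_mulVec, neg_mulVec] using congrFun h (Sum.inr j)
  refine ⟨?_, hbot⟩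
  have hzero : (1 - l) • (F *ᵥ u + G *ᵥ p) = 0 := by rw [sub_smul, one_smul, ← htop, sub_self]
  exact (smul_eq_zero.1 hzero).resolve_left (sub_ne_zero.2 hl.symm)

theorem exists_ne_zero_mulVec_eq_smul_of_saddlePoint_eigen [DecidableEq m] [DecidableEq n]
    (hF : IsUnit F) (hX : IsUnit X) {l : K} (hl : l ≠ 1) {w : m ⊕ n → K} (hw : w ≠ 0)
    (h : fromBlocks F G B 0 *ᵥ w = l • (fromBlocks F G 0 (-X) *ᵥ w)) :
    ∃ p : n → K, p ≠ 0 ∧ (X⁻¹ * B * F⁻¹ * G) *ᵥ p = l • p := by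
  rw [← Sum.elim_comp_inl_inr w] at h hw
  set u := w ∘ Sum.inl
  set p := w ∘ Sum.inr
  obtain ⟨htop, hbot⟩ := saddlePoint_eigen_blockRows F G B X hl h
  have hu : u = -(F⁻¹ *ᵥ G *ᵥ p) := by
    rw [← eq_neg_iff_add_eq_zero] at htop
    rw [← mulVec_neg, ← htop, mulVec_mulVec,
      nonsing_inv_mul F ((isUnit_iff_isUnit_det F).1 hF), one_mulVec]
  refine ⟨p, fun hp ↦ hw ?_, ?_⟩
  · rw [hu, hp]
    simp
  · calc (X⁻¹ * B * F⁻¹ * G) *ᵥ p = X⁻¹ *ᵥ -(B *ᵥ u) := by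
          simp only [hu, mulVec_neg, neg_neg, mulVec_mulVec, Matrix.mul_assoc]
      _ = l • p := by
          rw [hbot, neg_neg, mulVec_smul, mulVec_mulVec,
            nonsing_inv_mul X ((isUnit_iff_isUnit_det X).1 hX), one_mulVec]

end SaddlePoint

end Matrix

theorem stmt8_general (Nu Np : ℕ)
    (Fu : Matrix (Fin Nu) (Fin Nu) ℝ) (B : Matrix (Fin Np) (Fin Nu) ℝ)
    (Ap Fp Mp : Matrix (Fin Np) (Fin Np) ℝ)
    (hFu : IsUnit Fu)
    (hAp : IsUnit Ap) (hFp : IsUnit Fp) (hMp : IsUnit Mp) :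
    let X := Ap * Fp⁻¹ * Mp
    let A : Matrix (Fin Nu ⊕ Fin Np) (Fin Nu ⊕ Fin Np) ℝ := Matrix.fromBlocks Fu Bᵀ B 0
    let P : Matrix (Fin Nu ⊕ Fin Np) (Fin Nu ⊕ Fin Np) ℝ := Matrix.fromBlocks Fu Bᵀ 0 (-X)
    (Nu ≤ Module.finrank ℝ (LinearMap.ker (Matrix.toLin' (A - P)))) ∧
    (∀ l : ℝ, l ≠ 1 →
      (∃ w : Fin Nu ⊕ Fin Np → ℝ, w ≠ 0 ∧ A *ᵥ w = l • (P *ᵥ w)) →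
      ∃ p : Fin Np → ℝ, p ≠ 0 ∧ (X⁻¹ * B * Fu⁻¹ * Bᵀ) *ᵥ p = l • p) := by
  intro X A P
  have hX : IsUnit X := (hAp.mul (isUnit_nonsing_inv_iff.2 hFp)).mul hMp
  refine ⟨?_, fun l hl ⟨w, hw, h⟩ ↦
    exists_ne_zero_mulVec_eq_smul_of_saddlePoint_eigen Fu Bᵀ B X hFu hX hl hw h⟩
  have hker := card_le_finrank_ker_toLin'_fromBlocks_zero_zero B X
  rwa [Fintype.card_fin, ← fromBlocks_sub_fromBlocks_neg Fu Bᵀ] at hker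

/-- For the generalized eigenvalue problem `A w = λ P w` with `A = [[F_u, Bᵀ],[B, 0]]`,
`P = [[F_u, Bᵀ],[0, -X]]` and `X = A_p F_p⁻¹ M_p`, the value `λ = 1` is an eigenvalue of
multiplicity at least `N_u`, and every remaining eigenvalue solves
`(X⁻¹ B F_u⁻¹ Bᵀ - λ I) p = 0`. -/
theorem stmt8 (Nu Np : ℕ)
    (Fu : Matrix (Fin Nu) (Fin Nu) ℝ) (B : Matrix (Fin Np) (Fin Nu) ℝ)
    (Ap Fp Mp : Matrix (Fin Np) (Fin Np) ℝ)
    (hFu : IsUnit Fu) (hS : IsUnit (B * Fu⁻¹ * Bᵀ))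
    (hAp : IsUnit Ap) (hFp : IsUnit Fp) (hMp : IsUnit Mp) :
    let X := Ap * Fp⁻¹ * Mp
    let A : Matrix (Fin Nu ⊕ Fin Np) (Fin Nu ⊕ Fin Np) ℝ := Matrix.fromBlocks Fu Bᵀ B 0
    let P : Matrix (Fin Nu ⊕ Fin Np) (Fin Nu ⊕ Fin Np) ℝ := Matrix.fromBlocks Fu Bᵀ 0 (-X)
    (Nu ≤ Module.finrank ℝ (LinearMap.ker (Matrix.toLin' (A - P)))) ∧
    (∀ l : ℝ, l ≠ 1 →
      (∃ w : Fin Nu ⊕ Fin Np → ℝ, w ≠ 0 ∧ A *ᵥ w = l • (P *ᵥ w)) →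
      ∃ p : Fin Np → ℝ, p ≠ 0 ∧ (X⁻¹ * B * Fu⁻¹ * Bᵀ) *ᵥ p = l • p) :=
  stmt8_general Nu Np Fu B Ap Fp Mp hFu hAp hFp hMp
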